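/- arXiv:2511.11161 — 3 statements merged into one kernel-verified Lean document; each statement's English description precedes it below -/
import Mathlib

section
/- Let X₁,…,X_N be i.i.d. random variables in a measurable space X, and let G be a finite class of measurable functions g : X → ℝ with 0 ≤ g ≤ L for some L > 0. Then E[ max_{g ∈ G} ( E[g(X₁)] − (2/N)∑_{i=1}^N g(X_i) ) ] ≤ 11·L·log(|G|)/N, provided |G| ≥ 2. -/
open MeasureTheory ProbabilityTheory Finset Real

/-!
Put `t = N / (4L)` and `Z_g = t (E g(X₁) - (2/N) ∑ᵢ g(Xᵢ))`. By independence `E exp Z_g`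
factorises into moment generating functions of the `g(Xᵢ)`, and `e^{-x} ≤ 1 - x/2` on `[0, 1]`
bounds each factor by `exp (-E g(X₁) / (4L))`, so `E exp Z_g ≤ 1`. The soft-max bound
`max_g Z_g ≤ log ∑_g exp Z_g` and Jensen's inequality for `log` then give
`E max_g Z_g ≤ log |G|`, which is the claim with 4 in place of 11.
-/

lemma Real.exp_neg_le_one_sub_half {x : ℝ} (h0 : 0 ≤ x) (h1 : x ≤ 1) :
    exp (-x) ≤ 1 - x / 2 := by
  have hq := Real.quadratic_le_exp_of_nonneg h0
  have hmul : exp (-x) * exp x = 1 := by rw [← exp_add, neg_add_cancel, exp_zero]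
  nlinarith [exp_pos (-x), exp_pos x, mul_nonneg h0 h0]

lemma Real.le_log_sum_exp {ι : Type*} {s : Finset ι} {a : ι → ℝ} {i : ι} (hi : i ∈ s) :
    a i ≤ log (∑ j ∈ s, exp (a j)) :=
  (le_log_iff_exp_le (Finset.sum_pos (fun _ _ => exp_pos _) ⟨i, hi⟩)).2
    (Finset.single_le_sum (f := fun j => exp (a j)) (fun _ _ => (exp_pos _).le) hi)

section

variable {Ω : Type*} [MeasurableSpace Ω] {μ : Measure Ω}

namespace ProbabilityTheory

lemma mgf_neg_inv_two_mul_le_exp_of_mem_Icc [IsProbabilityMeasure μ] {Y : Ω → ℝ} {L : ℝ}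
    (hL : 0 < L) (hY : AEMeasurable Y μ) (hYL : ∀ᵐ ω ∂μ, Y ω ∈ Set.Icc 0 L) :
    mgf Y μ (-(2 * L)⁻¹) ≤ exp (-(μ[Y] / (4 * L))) := by
  have hpt : ∀ᵐ ω ∂μ, exp (-(2 * L)⁻¹ * Y ω) ≤ 1 - Y ω / (4 * L) := by
    filter_upwards [hYL] with ω ⟨h0, h1⟩
    have := exp_neg_le_one_sub_half (x := Y ω / (2 * L)) (by positivity)
      ((div_le_one (by positivity)).2 (by linarith))
    convert this using 2 <;> ring
  calc mgf Y μ (-(2 * L)⁻¹) ≤ ∫ ω, (1 - Y ω / (4 * L)) ∂μ :=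
        integral_mono_ae (integrable_exp_mul_of_mem_Icc hY hYL)
          ((integrable_const 1).sub ((Integrable.of_mem_Icc 0 L hY hYL).div_const _)) hpt
    _ = 1 - μ[Y] / (4 * L) := by
        rw [integral_sub (integrable_const 1) ((Integrable.of_mem_Icc 0 L hY hYL).div_const _),
          integral_div, integral_const, probReal_univ, one_smul]
    _ ≤ exp (-(μ[Y] / (4 * L))) := by linarith [one_sub_le_exp_neg (μ[Y] / (4 * L))]

lemma iIndepFun.integral_exp_sum_mean_sub_two_mul_le_one {ι : Type*} {Y : ι → Ω → ℝ}
    (hindep : iIndepFun Y μ) (hmeas : ∀ i, Measurable (Y i)) {L : ℝ} (hL : 0 < L)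
    (hYL : ∀ i, ∀ᵐ ω ∂μ, Y i ω ∈ Set.Icc 0 L) (s : Finset ι) :
    ∫ ω, exp (∑ i ∈ s, (μ[Y i] - 2 * Y i ω) / (4 * L)) ∂μ ≤ 1 := by
  have : IsProbabilityMeasure μ := hindep.isProbabilityMeasure
  have hsplit : ∀ ω, exp (∑ i ∈ s, (μ[Y i] - 2 * Y i ω) / (4 * L))
      = exp (∑ i ∈ s, μ[Y i] / (4 * L)) * exp (-(2 * L)⁻¹ * (∑ i ∈ s, Y i) ω) := by
    intro ω
    rw [← exp_add, Finset.sum_apply, Finset.mul_sum, ← Finset.sum_add_distrib]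
    congr 1; refine Finset.sum_congr rfl fun i _ => ?_
    field_simp; ring
  calc ∫ ω, exp (∑ i ∈ s, (μ[Y i] - 2 * Y i ω) / (4 * L)) ∂μ
      = exp (∑ i ∈ s, μ[Y i] / (4 * L)) * ∏ i ∈ s, mgf (Y i) μ (-(2 * L)⁻¹) := by
        simp_rw [hsplit, integral_const_mul, ← hindep.mgf_sum hmeas]; rfl
    _ ≤ exp (∑ i ∈ s, μ[Y i] / (4 * L)) * ∏ i ∈ s, exp (-(μ[Y i] / (4 * L))) := by
        gcongr with i
        · exact fun _ _ => mgf_nonneg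
        · exact mgf_neg_inv_two_mul_le_exp_of_mem_Icc hL (hmeas i).aemeasurable (hYL i)
    _ = 1 := by rw [← exp_sum, ← exp_add, Finset.sum_neg_distrib, add_neg_cancel, exp_zero]

end ProbabilityTheory

namespace MeasureTheory

lemma integral_sup'_le_log_card_div [IsProbabilityMeasure μ] {ι : Type*} {s : Finset ι}
    (hs : s.Nonempty) {f : ι → Ω → ℝ} {t : ℝ} (ht : 0 < t)
    (hint : ∀ i ∈ s, Integrable (fun ω => exp (t * f i ω)) μ)
    (hexp : ∀ i ∈ s, ∫ ω, exp (t * f i ω) ∂μ ≤ 1) :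
    ∫ ω, s.sup' hs (fun i => f i ω) ∂μ ≤ log s.card / t := by
  set S : Ω → ℝ := fun ω => ∑ i ∈ s, exp (t * f i ω)
  have hcard : (0 : ℝ) < s.card := by exact_mod_cast hs.card_pos
  -- Jensen's inequality for `log`, through its tangent line at `s.card`
  have hpt : ∀ ω, t * s.sup' hs (fun i => f i ω) ≤ log s.card + S ω / s.card - 1 := by
    intro ω
    obtain ⟨i, hi, hsup⟩ := s.exists_mem_eq_sup' hs (fun i => f i ω)
    have hS : 0 < S ω := Finset.sum_pos (fun _ _ => exp_pos _) hs
    have := log_le_sub_one_of_pos (div_pos hS hcard)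
    rw [log_div hS.ne' hcard.ne'] at this
    rw [hsup]
    linarith [le_log_sum_exp (a := fun j => t * f j ω) hi]
  by_cases hsup : Integrable (fun ω => s.sup' hs (fun i => f i ω)) μ
  swap
  · rw [integral_undef hsup]; exact div_nonneg (log_natCast_nonneg _) ht.le
  have hSint : Integrable S μ := integrable_finsetSum s hint
  have hSle : ∫ ω, S ω ∂μ ≤ s.card := by
    rw [integral_finsetSum s hint]
    simpa using Finset.sum_le_sum hexp
  rw [le_div_iff₀ ht, mul_comm, ← integral_const_mul]
  calc ∫ ω, t * s.sup' hs (fun i => f i ω) ∂μ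
      ≤ ∫ ω, (log s.card + S ω / s.card - 1) ∂μ :=
        integral_mono (hsup.const_mul t)
          (((integrable_const _).add (hSint.div_const _)).sub (integrable_const 1)) hpt
    _ = log s.card + (∫ ω, S ω ∂μ) / s.card - 1 := by
        rw [integral_sub (f := fun ω => log s.card + S ω / s.card)
          ((integrable_const _).add (hSint.div_const _)) (integrable_const 1),
          integral_add (integrable_const _) (hSint.div_const _), integral_div]
        simp
    _ ≤ log s.card := by linarith [(div_le_one hcard).2 hSle]

end MeasureTheory

end

theorem stmt7_general {Ω 𝒳 : Type*} [MeasurableSpace Ω] [MeasurableSpace 𝒳]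
    (μ : Measure Ω) [IsProbabilityMeasure μ]
    (N : ℕ) (hN : 0 < N) (X : Fin N → Ω → 𝒳)
    (hXmeas : ∀ i, Measurable (X i))
    (hindep : iIndepFun X μ)
    (hident : ∀ i, μ.map (X i) = μ.map (X ⟨0, hN⟩))
    (L : ℝ) (hL : 0 < L)
    (G : Finset (𝒳 → ℝ)) (hGne : G.Nonempty)
    (hGmeas : ∀ g ∈ G, Measurable g)
    (hGbdd : ∀ g ∈ G, ∀ x, g x ∈ Set.Icc 0 L) :
    (∫ ω, G.sup' hGne
        (fun g => (∫ ω', g (X ⟨0, hN⟩ ω') ∂μ) - (2 / N) * ∑ i, g (X i ω)) ∂μ)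
      ≤ 11 * L * Real.log G.card / N := by
  have ht : (0 : ℝ) < N / (4 * L) := by positivity
  have hXid : ∀ i, IdentDistrib (X i) (X ⟨0, hN⟩) μ μ := fun i =>
    ⟨(hXmeas i).aemeasurable, (hXmeas _).aemeasurable, hident i⟩
  refine (integral_sup'_le_log_card_div hGne ht (fun g hg => ?_) (fun g hg => ?_)).trans ?_
  · have hgm := hGmeas g hg
    refine integrable_exp_mul_of_le _ _ ht.le (by fun_prop) (ae_of_all _ fun ω => sub_le_self _ ?_)
    exact mul_nonneg (by positivity) (sum_nonneg fun i _ => (hGbdd g hg _).1)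
  · have hmean : ∀ i, ∫ ω, g (X i ω) ∂μ = ∫ ω', g (X ⟨0, hN⟩ ω') ∂μ := fun i =>
      ((hXid i).comp (hGmeas g hg)).integral_eq
    have := (hindep.comp (fun _ => g) fun _ => hGmeas g hg).integral_exp_sum_mean_sub_two_mul_le_one
      (fun i => (hGmeas g hg).comp (hXmeas i)) hL (fun i => ae_of_all _ fun ω => hGbdd g hg _) univ
    convert this using 3 with ω
    simp only [Function.comp_apply, hmean]
    rw [← Finset.sum_div, Finset.sum_sub_distrib, ← Finset.mul_sum, sum_const, card_univ,
      Fintype.card_fin, nsmul_eq_mul]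
    field_simp
  · rw [div_div_eq_mul_div]
    gcongr ?_ / _
    nlinarith [log_natCast_nonneg G.card]

/-- Finite-class empirical process bound: for i.i.d. X₁,…,X_N and a finite class G of
    measurable functions with values in [0, L] and |G| ≥ 2,
    E[max_{g∈G} (E[g(X₁)] − (2/N)∑ᵢ g(Xᵢ))] ≤ 11·L·log|G|/N. -/
theorem stmt7 {Ω 𝒳 : Type*} [MeasurableSpace Ω] [MeasurableSpace 𝒳]
    (μ : Measure Ω) [IsProbabilityMeasure μ]
    (N : ℕ) (hN : 0 < N) (X : Fin N → Ω → 𝒳)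
    (hXmeas : ∀ i, Measurable (X i))
    (hindep : iIndepFun X μ)
    (hident : ∀ i, μ.map (X i) = μ.map (X ⟨0, hN⟩))
    (L : ℝ) (hL : 0 < L)
    (G : Finset (𝒳 → ℝ)) (hGne : G.Nonempty) (hGcard : 2 ≤ G.card)
    (hGmeas : ∀ g ∈ G, Measurable g)
    (hGbdd : ∀ g ∈ G, ∀ x, g x ∈ Set.Icc 0 L) :
    (∫ ω, G.sup' hGne
        (fun g => (∫ ω', g (X ⟨0, hN⟩ ω') ∂μ) - (2 / N) * ∑ i, g (X i ω)) ∂μ)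
      ≤ 11 * L * Real.log G.card / N :=
  stmt7_general μ N hN X hXmeas hindep hident L hL G hGne hGmeas hGbdd
end

section
/- Let X₁,…,X_N be i.i.d. random variables in X and let G be a class of measurable functions g : X → [0, L]. Suppose G_δ is a δ-net of G with respect to the sup norm, of cardinality N_δ. Then E[ sup_{g ∈ G} ( E[g(X₁)] − (2/N)∑_{i=1}^N g(X_i) ) ] ≤ 3δ + 11·L·log(N_δ)/N. -/
open MeasureTheory ProbabilityTheory Finset Real

/-! With `λ = N / (11 L)`, every fixed `g` with values in `[0, L]` satisfies
`E exp (λ (E g(X₁) - (2/N) ∑ g(Xᵢ))) ≤ 1`: by independence the expectation factorises, and each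
factor is controlled by `exp (-2w) ≤ 1 - w ≤ exp (-w)` for `w ∈ [0, 1/2]`, the factor `2` in front
of the empirical mean absorbing the fluctuations. Replacing `g` by a net element costs `3δ`, and
the maximum over the `N_δ` net elements is bounded through the linearised log-sum-exp inequality
`x_h ≤ log N_δ + (∑ exp x) / N_δ - 1`, whose right-hand side has expectation at most `log N_δ`. -/

lemma exp_neg_two_mul_le_one_sub {w : ℝ} (h0 : 0 ≤ w) (h1 : w ≤ 1 / 2) :
    exp (-(2 * w)) ≤ 1 - w := by
  have hprod : exp (-(2 * w)) * exp (2 * w) = 1 := by rw [← exp_add]; simp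
  nlinarith [add_one_le_exp (2 * w), exp_pos (-(2 * w))]

lemma le_log_card_add_sum_exp_div_card_sub_one {α : Type*} {s : Finset α} {f : α → ℝ} {a : α}
    (ha : a ∈ s) : f a ≤ log #s + (∑ b ∈ s, exp (f b)) / #s - 1 := by
  have hs : (0 : ℝ) < #s := by exact_mod_cast card_pos.2 ⟨a, ha⟩
  have hexp : exp (f a - log #s) = exp (f a) / #s := by rw [exp_sub, exp_log hs]
  have hsingle : exp (f a) ≤ ∑ b ∈ s, exp (f b) :=
    single_le_sum (f := fun b => exp (f b)) (fun _ _ => (exp_pos _).le) ha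
  have hlin := add_one_le_exp (f a - log #s)
  rw [hexp] at hlin
  have := div_le_div_of_nonneg_right hsingle hs.le
  linarith

section

variable {Ω : Type*} [MeasurableSpace Ω] {μ : Measure Ω}

-- `f` need not be integrable (a supremum over an uncountable class need not be measurable); its
-- integral is then the junk value `0`, which is why `0 ≤ b` is assumed.
lemma integral_le_of_forall_le_of_integral_le {f F : Ω → ℝ} {b : ℝ} (hF : Integrable F μ)
    (hle : ∀ ω, f ω ≤ F ω) (hFb : ∫ ω, F ω ∂μ ≤ b) (hb : 0 ≤ b) : ∫ ω, f ω ∂μ ≤ b := by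
  by_cases hf : Integrable f μ
  · exact (integral_mono hf hF hle).trans hFb
  · rwa [integral_undef hf]

variable [IsProbabilityMeasure μ]

lemma mgf_neg_two_mul_le {Y : Ω → ℝ} {s : ℝ} (hY : Integrable Y μ) (hs : 0 ≤ s)
    (h0 : ∀ ω, 0 ≤ Y ω) (h1 : ∀ ω, s * Y ω ≤ 1 / 2) :
    mgf Y μ (-(2 * s)) ≤ exp (-(s * μ[Y])) := by
  have hexp : Integrable (fun ω => exp (-(2 * s) * Y ω)) μ := by
    refine .of_mem_Icc 0 1 (measurable_exp.comp_aemeasurable (hY.aemeasurable.const_mul _))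
      (ae_of_all _ fun ω => ⟨(exp_pos _).le, exp_le_one_iff.2 ?_⟩)
    nlinarith [h0 ω]
  have hlin : Integrable (fun ω => 1 - s * Y ω) μ := (integrable_const 1).sub (hY.const_mul s)
  calc mgf Y μ (-(2 * s)) ≤ ∫ ω, (1 - s * Y ω) ∂μ :=
        integral_mono hexp hlin fun ω => by
          simpa [mul_assoc] using exp_neg_two_mul_le_one_sub (mul_nonneg hs (h0 ω)) (h1 ω)
    _ = 1 - s * μ[Y] := by
        rw [integral_sub (integrable_const 1) (hY.const_mul s), integral_const_mul]; simp
    _ ≤ exp (-(s * μ[Y])) := by linarith [add_one_le_exp (-(s * μ[Y]))]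

lemma ProbabilityTheory.iIndepFun.mgf_sum_neg_two_mul_le {ι : Type*} {Y : ι → Ω → ℝ} {s : ℝ}
    (hindep : iIndepFun Y μ) (hint : ∀ i, Integrable (Y i) μ) (hs : 0 ≤ s) (h0 : ∀ i ω, 0 ≤ Y i ω)
    (h1 : ∀ i ω, s * Y i ω ≤ 1 / 2) (S : Finset ι) :
    mgf (∑ i ∈ S, Y i) μ (-(2 * s)) ≤ exp (-(s * ∑ i ∈ S, μ[Y i])) := by
  rw [hindep.mgf_sum₀ (fun i => (hint i).aemeasurable), mul_sum, ← sum_neg_distrib, exp_sum]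
  exact prod_le_prod (fun _ _ => mgf_nonneg) fun i _ => mgf_neg_two_mul_le (hint i) hs (h0 i) (h1 i)

lemma integral_iSup_le_of_net {ι κ : Type*} {Z : ι → Ω → ℝ} {W : κ → Ω → ℝ} {T : Finset κ}
    {c lam : ℝ} (hlam : 0 < lam) (hc : 0 ≤ c) (hnet : ∀ i, ∃ t ∈ T, ∀ ω, Z i ω ≤ W t ω + c)
    (hint : ∀ t ∈ T, Integrable (fun ω => exp (lam * W t ω)) μ)
    (hmgf : ∀ t ∈ T, ∫ ω, exp (lam * W t ω) ∂μ ≤ 1) :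
    ∫ ω, ⨆ i, Z i ω ∂μ ≤ c + log #T / lam := by
  have hbound : 0 ≤ c + log #T / lam := by have := Real.log_natCast_nonneg #T; positivity
  rcases isEmpty_or_nonempty ι with hι | hι
  · simpa using hbound
  obtain ⟨t₀, ht₀, -⟩ := hnet hι.some
  have hT : (0 : ℝ) < #T := by exact_mod_cast card_pos.2 ⟨t₀, ht₀⟩
  set a := c + (log #T - 1) / lam
  set b := 1 / (lam * #T)
  have hsum : Integrable (fun ω => ∑ t ∈ T, exp (lam * W t ω)) μ := integrable_finsetSum _ hint
  refine integral_le_of_forall_le_of_integral_le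
    (F := fun ω => a + b * ∑ t ∈ T, exp (lam * W t ω)) ((integrable_const a).add (hsum.const_mul b))
    (fun ω => ciSup_le fun i => ?_) ?_ hbound
  · obtain ⟨t, ht, hZW⟩ := hnet i
    have hW := le_log_card_add_sum_exp_div_card_sub_one (f := fun t => lam * W t ω) ht
    have hab : a + b * ∑ t ∈ T, exp (lam * W t ω)
        = c + (log #T + (∑ t ∈ T, exp (lam * W t ω)) / #T - 1) / lam := by
      simp only [a, b]; field_simp; ring
    rw [hab]
    have hWt : W t ω ≤ (log #T + (∑ t ∈ T, exp (lam * W t ω)) / #T - 1) / lam := by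
      rw [le_div_iff₀ hlam]; linarith
    linarith [hZW ω]
  · have hsum_le : ∑ t ∈ T, ∫ ω, exp (lam * W t ω) ∂μ ≤ #T := by
      simpa using sum_le_sum hmgf
    rw [integral_add (integrable_const a) (hsum.const_mul b), integral_const_mul,
      integral_finsetSum _ hint]
    simp only [integral_const, probReal_univ, smul_eq_mul, one_mul, a, b]
    have := mul_le_mul_of_nonneg_left hsum_le (by positivity : (0:ℝ) ≤ 1 / (lam * #T))
    field_simp at this ⊢
    linarith

noncomputable def offsetGap {𝒳 : Type*} (μ : Measure Ω) {N : ℕ} (X : Fin N → Ω → 𝒳) (i₀ : Fin N)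
    (g : 𝒳 → ℝ) (ω : Ω) : ℝ :=
  (∫ ω', g (X i₀ ω') ∂μ) - (2 / N) * ∑ i, g (X i ω)

section offsetGap

variable {𝒳 : Type*} {N : ℕ} {X : Fin N → Ω → 𝒳} {i₀ : Fin N}
  {g h : 𝒳 → ℝ} {L : ℝ}

lemma offsetGap_le_add_of_abs_sub_le {δ : ℝ} (hg : Integrable (fun ω => g (X i₀ ω)) μ)
    (hh : Integrable (fun ω => h (X i₀ ω)) μ) (hgh : ∀ x, |g x - h x| ≤ δ) (ω : Ω) :
    offsetGap μ X i₀ g ω ≤ offsetGap μ X i₀ h ω + 3 * δ := by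
  have hN : (0 : ℝ) < N := by exact_mod_cast i₀.pos
  have hmean : ∫ ω', g (X i₀ ω') ∂μ ≤ ∫ ω', h (X i₀ ω') ∂μ + δ := by
    calc ∫ ω', g (X i₀ ω') ∂μ ≤ ∫ ω', (h (X i₀ ω') + δ) ∂μ :=
          integral_mono hg (hh.add (integrable_const δ)) fun ω' => by
            linarith [(abs_le.1 (hgh (X i₀ ω'))).2]
      _ = ∫ ω', h (X i₀ ω') ∂μ + δ := by simp [integral_add hh (integrable_const δ)]
  have hsum : ∑ i, h (X i ω) ≤ ∑ i, g (X i ω) + N * δ := by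
    calc ∑ i, h (X i ω) ≤ ∑ i, (g (X i ω) + δ) :=
          sum_le_sum fun i _ => by linarith [(abs_le.1 (hgh (X i ω))).1]
      _ = ∑ i, g (X i ω) + N * δ := by simp [sum_add_distrib]
  have := mul_le_mul_of_nonneg_left hsum (by positivity : (0 : ℝ) ≤ 2 / N)
  have hδ : (2 / N : ℝ) * (N * δ) = 2 * δ := by field_simp
  rw [mul_add, hδ] at this
  unfold offsetGap
  linarith

variable [MeasurableSpace 𝒳] (hX : ∀ i, Measurable (X i)) (hg : Measurable g)
  (hgL : ∀ x, g x ∈ Set.Icc 0 L)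
include hX hg hgL

lemma integrable_exp_mul_offsetGap (lam : ℝ) (hlam : 0 ≤ lam) :
    Integrable (fun ω => exp (lam * offsetGap μ X i₀ g ω)) μ := by
  have hmeas : Measurable (offsetGap μ X i₀ g) := by
    unfold offsetGap; fun_prop
  refine integrable_exp_mul_of_le lam L hlam hmeas.aemeasurable (ae_of_all _ fun ω => ?_)
  have hmean : ∫ ω', g (X i₀ ω') ∂μ ≤ L := by
    calc ∫ ω', g (X i₀ ω') ∂μ ≤ ∫ _, L ∂μ :=
          integral_mono (.of_mem_Icc 0 L (hg.comp (hX i₀)).aemeasurable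
            (ae_of_all _ fun _ => hgL _)) (integrable_const L) fun _ => (hgL _).2
      _ = L := by simp
  have : 0 ≤ (2 / N : ℝ) * ∑ i, g (X i ω) :=
    mul_nonneg (by positivity) (sum_nonneg fun i _ => (hgL _).1)
  unfold offsetGap
  linarith

lemma integral_exp_mul_offsetGap_le_one (hindep : iIndepFun X μ)
    (hident : ∀ i, μ.map (X i) = μ.map (X i₀)) {lam : ℝ} (hlam : 0 ≤ lam)
    (hlamL : 2 * lam * L ≤ N) :
    ∫ ω, exp (lam * offsetGap μ X i₀ g ω) ∂μ ≤ 1 := by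
  have hN : (0 : ℝ) < N := by exact_mod_cast i₀.pos
  set Y : Fin N → Ω → ℝ := fun i => g ∘ X i
  set m := ∫ ω, g (X i₀ ω) ∂μ
  set s := lam / N
  have hYint : ∀ i, Integrable (Y i) μ := fun i =>
    .of_mem_Icc 0 L (hg.comp (hX i)).aemeasurable (ae_of_all _ fun _ => hgL _)
  have hmean : ∀ i, μ[Y i] = m := fun i =>
    (IdentDistrib.comp ⟨(hX i).aemeasurable, (hX i₀).aemeasurable, hident i⟩ hg).integral_eq
  have hsL : ∀ i ω, s * Y i ω ≤ 1 / 2 := fun i ω => by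
    have : s * Y i ω ≤ s * L := mul_le_mul_of_nonneg_left (hgL _).2 (by positivity)
    have : s * L ≤ 1 / 2 := by
      simp only [s]; rw [div_mul_eq_mul_div, div_le_iff₀ hN]; linarith
    linarith
  have hYindep : iIndepFun Y μ := hindep.comp _ fun _ => hg
  have hmgf := hYindep.mgf_sum_neg_two_mul_le hYint (by positivity) (fun i ω => (hgL _).1) hsL univ
  have hfactor : ∀ ω, exp (lam * offsetGap μ X i₀ g ω)
      = exp (lam * m) * exp (-(2 * s) * (∑ i, Y i) ω) := fun ω => by
    rw [← exp_add, Finset.sum_apply]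
    congr 1
    simp only [offsetGap, Y, s, Function.comp_apply, m]
    field_simp
    ring
  calc ∫ ω, exp (lam * offsetGap μ X i₀ g ω) ∂μ
      = exp (lam * m) * mgf (∑ i, Y i) μ (-(2 * s)) := by
        simp_rw [hfactor]; exact integral_const_mul _ _
    _ ≤ exp (lam * m) * exp (-(s * ∑ i, μ[Y i])) := by gcongr
    _ = 1 := by
        rw [← exp_add, exp_eq_one_iff]
        simp only [hmean, sum_const, card_univ, Fintype.card_fin, nsmul_eq_mul, s]
        field_simp
        ring

end offsetGap

end

/-- Lemma A.2 of Denis et al. (2021): if G_δ is a δ-net (sup norm) of a class G of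
    measurable functions valued in [0, L], then
    E[sup_{g∈G} (E[g(X₁)] − (2/N)∑ᵢ g(Xᵢ))] ≤ 3δ + 11·L·log(N_δ)/N. -/
theorem stmt8 {Ω 𝒳 : Type*} [MeasurableSpace Ω] [MeasurableSpace 𝒳]
    (μ : Measure Ω) [IsProbabilityMeasure μ]
    (N : ℕ) (hN : 0 < N) (X : Fin N → Ω → 𝒳)
    (hXmeas : ∀ i, Measurable (X i))
    (hindep : iIndepFun X μ)
    (hident : ∀ i, μ.map (X i) = μ.map (X ⟨0, hN⟩))
    (L : ℝ) (hL : 0 < L)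
    (G : Set (𝒳 → ℝ))
    (hGmeas : ∀ g ∈ G, Measurable g)
    (hGbdd : ∀ g ∈ G, ∀ x, g x ∈ Set.Icc 0 L)
    (δ : ℝ) (hδ : 0 ≤ δ)
    (Gδ : Finset (𝒳 → ℝ)) (hGδsub : ↑Gδ ⊆ G)
    (hnet : ∀ g ∈ G, ∃ h ∈ Gδ, ∀ x, |g x - h x| ≤ δ) :
    (∫ ω, (⨆ g : G,
        ((∫ ω', (g : 𝒳 → ℝ) (X ⟨0, hN⟩ ω') ∂μ) - (2 / N) * ∑ i, (g : 𝒳 → ℝ) (X i ω))) ∂μ)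
      ≤ 3 * δ + 11 * L * Real.log Gδ.card / N := by
  have hlam : 0 < (N : ℝ) / (11 * L) := by positivity
  have hint : ∀ g ∈ G, Integrable (fun ω => g (X ⟨0, hN⟩ ω)) μ := fun g hg =>
    .of_mem_Icc 0 L ((hGmeas g hg).comp (hXmeas _)).aemeasurable
      (ae_of_all _ fun _ => hGbdd g hg _)
  have hshift (g : G) : ∃ h ∈ Gδ, ∀ ω,
      offsetGap μ X ⟨0, hN⟩ g ω ≤ offsetGap μ X ⟨0, hN⟩ h ω + 3 * δ := by
    obtain ⟨h, hh, hgh⟩ := hnet g g.2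
    exact ⟨h, hh, offsetGap_le_add_of_abs_sub_le (hint g g.2) (hint h (hGδsub hh)) hgh⟩
  calc ∫ ω, ⨆ g : G, offsetGap μ X ⟨0, hN⟩ g ω ∂μ
      ≤ 3 * δ + log #Gδ / (N / (11 * L)) :=
        integral_iSup_le_of_net hlam (by positivity) hshift
          (fun h hh => integrable_exp_mul_offsetGap hXmeas (hGmeas h (hGδsub hh))
            (hGbdd h (hGδsub hh)) _ hlam.le)
          (fun h hh => integral_exp_mul_offsetGap_le_one hXmeas (hGmeas h (hGδsub hh))
            (hGbdd h (hGδsub hh)) hindep hident hlam.le (by field_simp; linarith))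
    _ = 3 * δ + 11 * L * log #Gδ / N := by field_simp
end

section
/- Let (M_t)_{t∈[0,T]} be a continuous local martingale with M₀ = 0 and quadratic variation ⟨M⟩, and let D > 0 be a constant with E[⟨M⟩_T] ≤ D. Define ξ = M_T / (2√(⟨M⟩_T + D)). Then E[ (√D / √(⟨M⟩_T + D)) · exp(2ξ²) ] ≤ 1. -/
open MeasureTheory ProbabilityTheory Real

/-! For every `c`, the supermartingale property gives `E[exp(c M_T - c²/2 ⟨M⟩_T)] ≤ 1`. Averaging
over `c ~ N(0, 1/D)` and exchanging the two integrals (Tonelli) keeps the bound `1`, while for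
fixed `ω` the Gaussian average is computed by completing the square: it is
`√D / √(⟨M⟩_T + D) · exp(M_T² / (2(⟨M⟩_T + D)))`, which is the integrand. -/

theorem MeasureTheory.Supermartingale.integral_le {Ω ι E : Type*} [Preorder ι]
    {m0 : MeasurableSpace Ω} {μ : Measure Ω} {ℱ : Filtration ι m0}
    [NormedAddCommGroup E] [NormedSpace ℝ E] [CompleteSpace E] [PartialOrder E]
    [IsOrderedAddMonoid E] [IsOrderedModule ℝ E] [ClosedIciTopology E] [SigmaFiniteFiltration μ ℱ]
    {f : ι → Ω → E} (hf : Supermartingale f ℱ μ) {i j : ι} (hij : i ≤ j) :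
    ∫ ω, f j ω ∂μ ≤ ∫ ω, f i ω ∂μ := by
  simpa using hf.setIntegral_le hij MeasurableSet.univ

theorem norm_integral_integral_le {Ω ι E : Type*} {m0 : MeasurableSpace Ω} [MeasurableSpace ι]
    {μ : Measure Ω} [SFinite μ] {ν : Measure ι} [IsProbabilityMeasure ν]
    [NormedAddCommGroup E] [NormedSpace ℝ E]
    {f : Ω → ι → E} (hf : StronglyMeasurable (Function.uncurry f))
    (hint : ∀ c, Integrable (fun ω => f ω c) μ) {K : ℝ} (hK : ∀ c, ∫ ω, ‖f ω c‖ ∂μ ≤ K) :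
    ‖∫ ω, ∫ c, f ω c ∂ν ∂μ‖ ≤ K := by
  obtain ⟨c₀⟩ := nonempty_of_isProbabilityMeasure ν
  have hK₀ : 0 ≤ K := (integral_nonneg fun ω => norm_nonneg _).trans (hK c₀)
  suffices h : ‖∫ ω, ∫ c, f ω c ∂ν ∂μ‖ₑ ≤ ENNReal.ofReal K by
    simpa using ENNReal.toReal_le_of_le_ofReal hK₀ h
  calc ‖∫ ω, ∫ c, f ω c ∂ν ∂μ‖ₑ
      ≤ ∫⁻ ω, ‖∫ c, f ω c ∂ν‖ₑ ∂μ := enorm_integral_le_lintegral_enorm _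
    _ ≤ ∫⁻ ω, ∫⁻ c, ‖f ω c‖ₑ ∂ν ∂μ :=
        lintegral_mono fun ω => enorm_integral_le_lintegral_enorm _
    _ = ∫⁻ c, ∫⁻ ω, ‖f ω c‖ₑ ∂μ ∂ν := lintegral_lintegral_swap hf.enorm.aemeasurable
    _ ≤ ∫⁻ _, ENNReal.ofReal K ∂ν := lintegral_mono fun c => by
        rw [← ofReal_integral_norm_eq_lintegral_enorm (hint c)]
        exact ENNReal.ofReal_le_ofReal (hK c)
    _ = ENNReal.ofReal K := by simp

lemma mul_sub_div_two_mul_sq_eq {s : ℝ} (hs : s ≠ 0) (x c : ℝ) :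
    c * x - s / 2 * c ^ 2 = x ^ 2 / (2 * s) + -(s / 2) * (c - x / s) ^ 2 := by
  field_simp
  ring

theorem integral_exp_mul_sub_div_two_mul_sq {s : ℝ} (hs : 0 < s) (x : ℝ) :
    ∫ c, exp (c * x - s / 2 * c ^ 2) = √(2 * π / s) * exp (x ^ 2 / (2 * s)) := by
  simp_rw [mul_sub_div_two_mul_sq_eq hs.ne', exp_add, integral_const_mul,
    integral_sub_right_eq_self (fun c => exp (-(s / 2) * c ^ 2)), integral_gaussian]
  rw [mul_comm, div_div_eq_mul_div, mul_comm π 2]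

theorem integral_exp_mul_sub_sq_div_two_mul_gaussianReal {D : ℝ} (hD : 0 < D) {a : ℝ} (ha : 0 < a + D)
    (x : ℝ) :
    ∫ c, exp (c * x - c ^ 2 / 2 * a) ∂gaussianReal 0 D⁻¹.toNNReal
      = √D / √(a + D) * exp (x ^ 2 / (2 * (a + D))) := by
  have hv : ((D⁻¹.toNNReal : NNReal) : ℝ) = D⁻¹ := Real.coe_toNNReal _ (inv_nonneg.2 hD.le)
  have hdensity : ∀ c, gaussianPDFReal 0 D⁻¹.toNNReal c • exp (c * x - c ^ 2 / 2 * a)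
      = √(D / (2 * π)) * exp (c * x - (a + D) / 2 * c ^ 2) := by
    intro c
    rw [gaussianPDFReal, hv, smul_eq_mul, mul_assoc, ← exp_add, ← sqrt_inv]
    congr 2
    · field_simp
    · field_simp
      ring
  rw [integral_gaussianReal_eq_integral_smul (by simpa using hD), funext hdensity,
    integral_const_mul, integral_exp_mul_sub_div_two_mul_sq ha, ← mul_assoc, ← sqrt_mul (by positivity),
    show D / (2 * π) * (2 * π / (a + D)) = D / (a + D) by field_simp, sqrt_div hD.le]

theorem stmt9_general {Ω : Type*} {m0 : MeasurableSpace Ω} (μ : Measure Ω) [IsProbabilityMeasure μ]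
    (ℱ : Filtration ℝ m0) (T : ℝ) (hT : 0 < T)
    (M A : ℝ → Ω → ℝ)
    (hAmono : ∀ ω, Monotone fun t => A t ω)
    (hM0 : ∀ ω, M 0 ω = 0) (hA0 : ∀ ω, A 0 ω = 0)
    (hMadapted : Adapted ℱ M) (hAadapted : Adapted ℱ A)
    (hlocmart : ∀ c : ℝ,
      Supermartingale (fun t ω => Real.exp (c * M t ω - c^2 / 2 * A t ω)) ℱ μ)
    (D : ℝ) (hD : 0 < D) :
    (∫ ω, (Real.sqrt D / Real.sqrt (A T ω + D))
        * Real.exp (2 * (M T ω / (2 * Real.sqrt (A T ω + D)))^2) ∂μ) ≤ 1 := by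
  have hAT_nonneg : ∀ ω, 0 ≤ A T ω := fun ω => by simpa [hA0 ω] using hAmono ω hT.le
  have hMT_meas : Measurable (M T) := (hMadapted T).mono (ℱ.le T) le_rfl
  have hAT_meas : Measurable (A T) := (hAadapted T).mono (ℱ.le T) le_rfl
  have hmix : ∀ ω, ∫ c, exp (c * M T ω - c ^ 2 / 2 * A T ω) ∂gaussianReal 0 D⁻¹.toNNReal
      = √D / √(A T ω + D) * exp (2 * (M T ω / (2 * √(A T ω + D))) ^ 2) := by
    intro ω
    have hpos : 0 < A T ω + D := by linarith [hAT_nonneg ω]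
    rw [integral_exp_mul_sub_sq_div_two_mul_gaussianReal hD hpos, div_pow, mul_pow,
      sq_sqrt hpos.le]
    congr 2
    field_simp
  simp only [← hmix]
  refine (le_norm_self _).trans (norm_integral_integral_le (by measurability)
    (fun c => (hlocmart c).integrable T) fun c => ?_)
  simpa [abs_of_pos (exp_pos _), hM0, hA0] using (hlocmart c).integral_le hT.le

/-- Self-normalized exponential inequality for a continuous local martingale (Lemma 4.9 of
    Oga–Koike 2024). A continuous local martingale `M` with `M₀ = 0` and quadratic variation
    `A = ⟨M⟩` is encoded through its characteristic property: `A` is continuous, nondecreasing,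
    adapted with `A₀ = 0`, `M` is continuous adapted, and for every `c ∈ ℝ` the process
    `exp(c·M_t − c²/2·A_t)` is a supermartingale. If `E[A_T] ≤ D` with `D > 0` and
    `ξ = M_T/(2√(A_T + D))`, then `E[(√D/√(A_T + D))·exp(2ξ²)] ≤ 1`. -/
theorem stmt9 {Ω : Type*} {m0 : MeasurableSpace Ω} (μ : Measure Ω) [IsProbabilityMeasure μ]
    (ℱ : Filtration ℝ m0) (T : ℝ) (hT : 0 < T)
    (M A : ℝ → Ω → ℝ)
    (hMcont : ∀ ω, Continuous fun t => M t ω)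
    (hAcont : ∀ ω, Continuous fun t => A t ω)
    (hAmono : ∀ ω, Monotone fun t => A t ω)
    (hM0 : ∀ ω, M 0 ω = 0) (hA0 : ∀ ω, A 0 ω = 0)
    (hMadapted : Adapted ℱ M) (hAadapted : Adapted ℱ A)
    (hlocmart : ∀ c : ℝ,
      Supermartingale (fun t ω => Real.exp (c * M t ω - c^2 / 2 * A t ω)) ℱ μ)
    (D : ℝ) (hD : 0 < D) (hAD : ∫ ω, A T ω ∂μ ≤ D) :
    (∫ ω, (Real.sqrt D / Real.sqrt (A T ω + D))
        * Real.exp (2 * (M T ω / (2 * Real.sqrt (A T ω + D)))^2) ∂μ) ≤ 1 :=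
  stmt9_general μ ℱ T hT M A hAmono hM0 hA0 hMadapted hAadapted hlocmart D hD
end
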